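/- arXiv:2404.19156 — 4 statements merged into one kernel-verified Lean document; each statement's English description precedes it below -/
import Mathlib

section
/- Let A ∈ ℝ^{m×n}, L ∈ ℝ^{p×n}, λ ≠ 0, b ∈ ℝ^m, h ∈ ℝ^p, and suppose A_L = AᵀA + λ²LᵀL is invertible. Fix k with 1 ≤ k ≤ m, let a_kᵀ = e_kᵀA, E_k = I_m − e_k e_kᵀ, and set ã_kk = a_kᵀ A_L⁻¹ a_k. Assume ã_kk ≠ 1 and that A_L − a_k a_kᵀ is invertible. Define x_λ = A_L⁻¹(Aᵀb + λ²Lᵀh) and the leave-one-out solution x_λ^[k] = (A_L − a_k a_kᵀ)⁻¹(AᵀE_k b + λ²Lᵀh). Then (A x_λ^[k])_k − b_k = ((A x_λ)_k − b_k)/(1 − ã_kk). -/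
open Matrix

theorem stmt3 {m n p : ℕ}
    (A : Matrix (Fin m) (Fin n) ℝ) (L : Matrix (Fin p) (Fin n) ℝ)
    (lam : ℝ) (hlam : lam ≠ 0)
    (b : Fin m → ℝ) (h : Fin p → ℝ) (k : Fin m)
    (A_L : Matrix (Fin n) (Fin n) ℝ)
    (hA_L : A_L = Aᵀ * A + lam ^ 2 • (Lᵀ * L))
    (hALinv : IsUnit A_L.det)
    (a : Fin n → ℝ) (ha : a = A k)
    (E : Matrix (Fin m) (Fin m) ℝ)
    (hE : E = 1 - vecMulVec (Pi.single k 1) (Pi.single k 1))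
    (akk : ℝ) (hakk : akk = a ⬝ᵥ (A_L⁻¹ *ᵥ a))
    (hakk1 : akk ≠ 1)
    (hALkinv : IsUnit (A_L - vecMulVec a a).det)
    (xlam : Fin n → ℝ)
    (hxlam : xlam = A_L⁻¹ *ᵥ (Aᵀ *ᵥ b + lam ^ 2 • (Lᵀ *ᵥ h)))
    (xk : Fin n → ℝ)
    (hxk : xk = (A_L - vecMulVec a a)⁻¹ *ᵥ (Aᵀ *ᵥ (E *ᵥ b) + lam ^ 2 • (Lᵀ *ᵥ h))) :
    (A *ᵥ xk) k - b k = ((A *ᵥ xlam) k - b k) / (1 - akk) := by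
  -- (A *ᵥ x) k = a ⬝ᵥ x
  have hrow : ∀ x : Fin n → ℝ, (A *ᵥ x) k = a ⬝ᵥ x := by
    intro x; rw [ha]; rfl
  have hvm : ∀ (u : Fin n → ℝ) (w : Fin n → ℝ),
      vecMulVec u u *ᵥ w = (u ⬝ᵥ w) • u := by
    intro u w
    ext i
    simp [vecMulVec, mulVec, dotProduct, Finset.mul_sum, mul_comm, mul_left_comm]
  -- E *ᵥ b = b - b k • (Pi.single k 1 : Fin m → ℝ)
  have hEb : E *ᵥ b = b - b k • (Pi.single k 1 : Fin m → ℝ) := by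
    rw [hE]
    ext i
    simp [sub_mulVec, mulVec, vecMulVec, dotProduct, Pi.single_apply, Matrix.one_apply,
      mul_sub, Finset.sum_sub_distrib, sub_mul, ite_mul, Finset.sum_ite_eq]
  -- Aᵀ *ᵥ Pi.single k 1 = a
  have hAtk : Aᵀ *ᵥ (b k • (Pi.single k 1 : Fin m → ℝ)) = b k • a := by
    ext i
    simp [mulVec, dotProduct, Pi.single_apply, ha, mul_comm]
  -- the leave-one-out normal equation
  have hinvmul : (A_L - vecMulVec a a) *ᵥ xk
      = Aᵀ *ᵥ (E *ᵥ b) + lam ^ 2 • (Lᵀ *ᵥ h) := by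
    rw [hxk, mulVec_mulVec, Matrix.mul_nonsing_inv _ hALkinv, one_mulVec]
  have hALxlam : A_L *ᵥ xlam = Aᵀ *ᵥ b + lam ^ 2 • (Lᵀ *ᵥ h) := by
    rw [hxlam, mulVec_mulVec, Matrix.mul_nonsing_inv _ hALinv, one_mulVec]
  have key : A_L *ᵥ xk - (a ⬝ᵥ xk) • a = A_L *ᵥ xlam - b k • a := by
    have := hinvmul
    rw [sub_mulVec, hvm] at this
    rw [this, hEb, hALxlam]
    rw [Matrix.mulVec_sub, hAtk]
    abel
  -- apply A_L⁻¹
  have hinvAL : ∀ x : Fin n → ℝ, A_L⁻¹ *ᵥ (A_L *ᵥ x) = x := by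
    intro x
    rw [mulVec_mulVec, Matrix.nonsing_inv_mul _ hALinv, one_mulVec]
  have key2 : xk - (a ⬝ᵥ xk) • (A_L⁻¹ *ᵥ a) = xlam - b k • (A_L⁻¹ *ᵥ a) := by
    have := congrArg (fun v => A_L⁻¹ *ᵥ v) key
    simpa [Matrix.mulVec_sub, Matrix.mulVec_smul, hinvAL] using this
  have key3 : a ⬝ᵥ xk - (a ⬝ᵥ xk) * akk = a ⬝ᵥ xlam - b k * akk := by
    have := congrArg (fun v => a ⬝ᵥ v) key2
    simpa [dotProduct_sub, dotProduct_smul, hakk, mul_comm] using this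
  rw [hrow, hrow]
  have h1 : (1 : ℝ) - akk ≠ 0 := by
    intro hc; apply hakk1; linarith
  field_simp
  ring_nf
  ring_nf at key3
  linarith
end

section
/- Under the GSVD setup with λ > 0 and A_L = AᵀA + λ²LᵀL, the trace of the complementary resolution matrix satisfies Tr(I_m − A A_L⁻¹ Aᵀ) = (m − n) + Σ_{i=1}^{ñ} λ²/(γ_i² + λ²). -/
open Matrix BigOperators Finset

theorem stmt6
    {m n p nr : ℕ} (hnm : n ≤ m) (hrn : nr ≤ n) (hrp : nr ≤ p)
    (A : Matrix (Fin m) (Fin n) ℝ) (L : Matrix (Fin p) (Fin n) ℝ)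
    (U : Matrix (Fin m) (Fin m) ℝ) (V : Matrix (Fin p) (Fin p) ℝ)
    (X : Matrix (Fin n) (Fin n) ℝ) (hX : IsUnit X.det)
    (hU : Uᵀ * U = 1) (hU' : U * Uᵀ = 1)
    (hV : Vᵀ * V = 1) (hV' : V * Vᵀ = 1)
    (uv mu : Fin nr → ℝ)
    (huv : ∀ i, 0 ≤ uv i ∧ uv i < 1) (hmu : ∀ i, 0 < mu i ∧ mu i ≤ 1)
    (huvmu : ∀ i, uv i ^ 2 + mu i ^ 2 = 1)
    (Ups : Matrix (Fin m) (Fin n) ℝ)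
    (hUps : Ups = Matrix.of fun (i : Fin m) (j : Fin n) =>
      if (i : ℕ) = (j : ℕ) then
        (if hj : (j : ℕ) < nr then uv ⟨(j : ℕ), hj⟩ else 1) else 0)
    (Mt : Matrix (Fin p) (Fin n) ℝ)
    (hMt : Mt = Matrix.of fun (i : Fin p) (j : Fin n) =>
      if hij : (i : ℕ) = (j : ℕ) ∧ (j : ℕ) < nr then mu ⟨(j : ℕ), hij.2⟩ else 0)
    (hA : A = U * Ups * X⁻¹) (hL : L = V * Mt * X⁻¹)
    (gam : Fin nr → ℝ) (hgam : ∀ i, gam i = uv i / mu i)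
    (lam : ℝ) (hlam : 0 < lam) :
    Matrix.trace (1 - A * (Aᵀ * A + lam ^ 2 • (Lᵀ * L))⁻¹ * Aᵀ)
      = ((m : ℝ) - (n : ℝ)) + ∑ i : Fin nr, lam ^ 2 / (gam i ^ 2 + lam ^ 2) := by
  -- diagonal entries
  set e : Fin n → ℝ := fun j => if h : (j:ℕ) < nr then uv ⟨j, h⟩ ^ 2 else 1 with he
  set e' : Fin n → ℝ := fun j => if h : (j:ℕ) < nr then mu ⟨j, h⟩ ^ 2 else 0 with he'
  set d : Fin n → ℝ := fun j => e j + lam ^ 2 * e' j with hd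
  have hdpos : ∀ j, 0 < d j := by
    intro j
    simp only [hd, he, he']
    by_cases h : (j:ℕ) < nr
    · simp only [dif_pos h]
      have h1 := (hmu ⟨j, h⟩).1
      have h2 := (huv ⟨j, h⟩).1
      positivity
    · simp only [dif_neg h]; norm_num
  -- Upsᵀ * Ups = diagonal e
  have hUU : Upsᵀ * Ups = Matrix.diagonal e := by
    ext j k
    simp only [Matrix.mul_apply, Matrix.transpose_apply, hUps, Matrix.of_apply,
      Matrix.diagonal_apply]
    rw [Finset.sum_eq_single (⟨(j:ℕ), lt_of_lt_of_le j.2 hnm⟩ : Fin m)]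
    · by_cases hjk : j = k
      · subst hjk
        simp [he]
        by_cases h : (j:ℕ) < nr
        · simp [h, sq]
        · simp [h]
      · have : ((j:ℕ) : ℕ) ≠ (k:ℕ) := fun h => hjk (Fin.ext h)
        simp [this, hjk]
    · intro i _ hij
      have : (i:ℕ) ≠ (j:ℕ) := fun h => hij (Fin.ext h)
      simp [this]
    · intro h; exact absurd (Finset.mem_univ _) h
  -- Mtᵀ * Mt = diagonal e'
  have hMM : Mtᵀ * Mt = Matrix.diagonal e' := by
    ext j k
    simp only [Matrix.mul_apply, Matrix.transpose_apply, hMt, Matrix.of_apply,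
      Matrix.diagonal_apply]
    by_cases hj : (j:ℕ) < nr
    · rw [Finset.sum_eq_single (⟨(j:ℕ), lt_of_lt_of_le hj hrp⟩ : Fin p)]
      · by_cases hjk : j = k
        · subst hjk
          simp [he', hj, sq]
        · have hne : ((j:ℕ) : ℕ) ≠ (k:ℕ) := fun h => hjk (Fin.ext h)
          simp [hne, hjk]
      · intro i _ hij
        have : ¬((i:ℕ) = (j:ℕ) ∧ (j:ℕ) < nr) := fun h => hij (Fin.ext h.1)
        simp [this]
      · intro h; exact absurd (Finset.mem_univ _) h
    · have hz : ∀ i : Fin p, ¬((i:ℕ) = (j:ℕ) ∧ (j:ℕ) < nr) := fun i h => hj h.2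
      by_cases hjk : j = k
      · subst hjk
        simp [he', hj, hz]
      · simp [hz, hjk]
  -- the regularized matrix
  have hXl : X⁻¹ * X = 1 := Matrix.nonsing_inv_mul X hX
  have hXr : X * X⁻¹ = 1 := Matrix.mul_nonsing_inv X hX
  have hAL : Aᵀ * A + lam ^ 2 • (Lᵀ * L) = X⁻¹ᵀ * Matrix.diagonal d * X⁻¹ := by
    have h1 : Aᵀ * A = X⁻¹ᵀ * (Upsᵀ * Ups) * X⁻¹ := by
      rw [hA]
      simp only [Matrix.transpose_mul, Matrix.mul_assoc]
      rw [← Matrix.mul_assoc Uᵀ U, hU, Matrix.one_mul]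
    have h2 : Lᵀ * L = X⁻¹ᵀ * (Mtᵀ * Mt) * X⁻¹ := by
      rw [hL]
      simp only [Matrix.transpose_mul, Matrix.mul_assoc]
      rw [← Matrix.mul_assoc Vᵀ V, hV, Matrix.one_mul]
    rw [h1, h2, hUU, hMM]
    have hsm : lam ^ 2 • (X⁻¹ᵀ * Matrix.diagonal e' * X⁻¹)
        = X⁻¹ᵀ * (lam ^ 2 • Matrix.diagonal e') * X⁻¹ := by
      simp [Matrix.mul_smul, Matrix.smul_mul]
    rw [hsm, ← Matrix.add_mul, ← Matrix.mul_add]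
    congr 2
    ext j k
    by_cases hjk : j = k
    · subst hjk; simp [Matrix.diagonal_apply, hd]
    · simp [Matrix.diagonal_apply, hjk]
  -- its inverse
  have hinv : (Aᵀ * A + lam ^ 2 • (Lᵀ * L))⁻¹ = X * Matrix.diagonal (fun j => (d j)⁻¹) * Xᵀ := by
    apply Matrix.inv_eq_right_inv
    rw [hAL]
    calc X⁻¹ᵀ * Matrix.diagonal d * X⁻¹ * (X * Matrix.diagonal (fun j => (d j)⁻¹) * Xᵀ)
        = X⁻¹ᵀ * (Matrix.diagonal d * ((X⁻¹ * X) * Matrix.diagonal (fun j => (d j)⁻¹))) * Xᵀ := by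
          noncomm_ring
      _ = X⁻¹ᵀ * Xᵀ := by
          rw [hXl, Matrix.one_mul, Matrix.diagonal_mul_diagonal]
          have : (fun j => d j * (d j)⁻¹) = fun _ => (1:ℝ) := by
            funext j; exact mul_inv_cancel₀ (hdpos j).ne'
          rw [this, Matrix.diagonal_one, Matrix.mul_one]
      _ = 1 := by rw [← Matrix.transpose_mul, hXr, Matrix.transpose_one]
  -- the trace
  have htr : Matrix.trace (A * (Aᵀ * A + lam ^ 2 • (Lᵀ * L))⁻¹ * Aᵀ)
      = ∑ j : Fin n, e j * (d j)⁻¹ := by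
    rw [hinv, hA]
    simp only [Matrix.transpose_mul]
    have hXX : Xᵀ * X⁻¹ᵀ = 1 := by rw [← Matrix.transpose_mul, hXl, Matrix.transpose_one]
    have this1 : U * Ups * X⁻¹ * (X * Matrix.diagonal (fun j => (d j)⁻¹) * Xᵀ) * (X⁻¹ᵀ * (Upsᵀ * Uᵀ))
        = U * (Ups * Matrix.diagonal (fun j => (d j)⁻¹) * Upsᵀ) * Uᵀ := by
      simp only [Matrix.mul_assoc]
      rw [← Matrix.mul_assoc X⁻¹ X, hXl, Matrix.one_mul,
        ← Matrix.mul_assoc Xᵀ X⁻¹ᵀ, hXX, Matrix.one_mul]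
    rw [this1, Matrix.trace_mul_cycle, hU, Matrix.one_mul,
      Matrix.trace_mul_cycle, hUU, Matrix.diagonal_mul_diagonal, Matrix.trace_diagonal]
  rw [Matrix.trace_sub, Matrix.trace_one, htr]
  -- now pure arithmetic
  have key : ∀ i : Fin nr, lam ^ 2 / (gam i ^ 2 + lam ^ 2)
      = 1 - uv i ^ 2 * (uv i ^ 2 + lam ^ 2 * mu i ^ 2)⁻¹ := by
    intro i
    have hm := (hmu i).1
    have hpos : 0 < uv i ^ 2 + lam ^ 2 * mu i ^ 2 := by
      have := (huv i).1; positivity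
    rw [hgam]
    field_simp
    try ring
  have hsum : ∑ j : Fin n, e j * (d j)⁻¹
      = (∑ i : Fin nr, uv i ^ 2 * (uv i ^ 2 + lam ^ 2 * mu i ^ 2)⁻¹) + ((n : ℝ) - nr) := by
    have hfun : ∀ j : Fin n, e j * (d j)⁻¹ =
        (fun k : ℕ => if h : k < nr then uv ⟨k, h⟩ ^ 2 * (uv ⟨k, h⟩ ^ 2 + lam ^ 2 * mu ⟨k, h⟩ ^ 2)⁻¹ else 1) (j : ℕ) := by
      intro j
      simp only [he, he', hd]
      by_cases h : (j:ℕ) < nr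
      · simp [h]
      · simp [h]
    calc ∑ j : Fin n, e j * (d j)⁻¹
        = ∑ k ∈ Finset.range n, (fun k : ℕ => if h : k < nr then uv ⟨k, h⟩ ^ 2 * (uv ⟨k, h⟩ ^ 2 + lam ^ 2 * mu ⟨k, h⟩ ^ 2)⁻¹ else 1) k := by
          rw [← Fin.sum_univ_eq_sum_range]
          exact Finset.sum_congr rfl fun j _ => hfun j
      _ = (∑ k ∈ Finset.range nr, (fun k : ℕ => if h : k < nr then uv ⟨k, h⟩ ^ 2 * (uv ⟨k, h⟩ ^ 2 + lam ^ 2 * mu ⟨k, h⟩ ^ 2)⁻¹ else 1) k)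
          + ∑ k ∈ Finset.Ico nr n, (fun k : ℕ => if h : k < nr then uv ⟨k, h⟩ ^ 2 * (uv ⟨k, h⟩ ^ 2 + lam ^ 2 * mu ⟨k, h⟩ ^ 2)⁻¹ else 1) k := by
          exact (Finset.sum_range_add_sum_Ico _ hrn).symm
      _ = (∑ i : Fin nr, uv i ^ 2 * (uv i ^ 2 + lam ^ 2 * mu i ^ 2)⁻¹) + ((n : ℝ) - nr) := by
          congr 1
          · rw [← Fin.sum_univ_eq_sum_range]
            exact Finset.sum_congr rfl fun i _ => by simp [i.2]
          · have hone : ∀ k ∈ Finset.Ico nr n,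
                (fun k : ℕ => if h : k < nr then uv ⟨k, h⟩ ^ 2 * (uv ⟨k, h⟩ ^ 2 + lam ^ 2 * mu ⟨k, h⟩ ^ 2)⁻¹ else 1) k = 1 := by
              intro k hk
              simp [Nat.not_lt.mpr (Finset.mem_Ico.mp hk).1]
            rw [Finset.sum_congr rfl hone, Finset.sum_const, Nat.card_Ico, nsmul_eq_mul,
              Nat.cast_sub hrn, mul_one]
  rw [hsum, Finset.sum_congr rfl (fun i _ => key i), Finset.sum_sub_distrib,
    Finset.sum_const, Finset.card_univ, Fintype.card_fin]
  simp only [nsmul_eq_mul, mul_one]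
  push_cast [Fintype.card_fin]
  ring
end

section
/- Under the GSVD setup with λ > 0, let b ∈ ℝ^m, h ∈ ℝ^p, and let x_λ = A_L⁻¹(Aᵀb + λ²Lᵀh) with A_L = AᵀA + λ²LᵀL. Denote by u_i the i-th column of U and by v_i the i-th column of V. Then ‖A x_λ − b‖₂² = Σ_{i=1}^{ñ} (λ²γ_i(v_iᵀh)/(γ_i²+λ²))² + Σ_{i=1}^{ñ} (λ²(u_iᵀb)/(γ_i²+λ²))² + Σ_{i=n+1}^{m} (u_iᵀb)² − 2 Σ_{i=1}^{ñ} λ⁴γ_i(u_iᵀb)(v_iᵀh)/(γ_i²+λ²)², where sums whose lower limit exceeds their upper limit are zero. -/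
open Matrix BigOperators Finset

lemma sumIte {m : ℕ} (k : ℕ) (hk : k < m) (f : Fin m → ℝ) :
    ∑ i : Fin m, (if (i : ℕ) = k then f i else 0) = f ⟨k, hk⟩ := by
  rw [Finset.sum_eq_single (⟨k, hk⟩ : Fin m)]
  · simp
  · intro i _ hne
    rw [if_neg]
    exact fun hc => hne (Fin.ext hc)
  · simp

lemma termId (u mu l B H : ℝ) (hmu : 0 < mu) (hl : 0 < l) :
    (u * ((u ^ 2 + l ^ 2 * mu ^ 2)⁻¹ * (u * B + l ^ 2 * (mu * H))) - B) ^ 2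
      = (l ^ 2 * (u / mu) * H / ((u / mu) ^ 2 + l ^ 2)) ^ 2
        + (l ^ 2 * B / ((u / mu) ^ 2 + l ^ 2)) ^ 2
        - 2 * (l ^ 4 * (u / mu) * B * H / ((u / mu) ^ 2 + l ^ 2) ^ 2) := by
  have hmu' : mu ≠ 0 := hmu.ne'
  have hd : u ^ 2 + l ^ 2 * mu ^ 2 ≠ 0 := by positivity
  have hg : (u / mu) ^ 2 + l ^ 2 ≠ 0 := by positivity
  field_simp
  ring

theorem stmt7
    {m n p nr : ℕ} (hnm : n ≤ m) (hrn : nr ≤ n) (hrp : nr ≤ p)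
    (A : Matrix (Fin m) (Fin n) ℝ) (L : Matrix (Fin p) (Fin n) ℝ)
    (U : Matrix (Fin m) (Fin m) ℝ) (V : Matrix (Fin p) (Fin p) ℝ)
    (X : Matrix (Fin n) (Fin n) ℝ) (hX : IsUnit X.det)
    (hU : Uᵀ * U = 1) (hU' : U * Uᵀ = 1)
    (hV : Vᵀ * V = 1) (hV' : V * Vᵀ = 1)
    (uv mu : Fin nr → ℝ)
    (huv : ∀ i, 0 ≤ uv i ∧ uv i < 1) (hmu : ∀ i, 0 < mu i ∧ mu i ≤ 1)
    (huvmu : ∀ i, uv i ^ 2 + mu i ^ 2 = 1)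
    (Ups : Matrix (Fin m) (Fin n) ℝ)
    (hUps : Ups = Matrix.of fun (i : Fin m) (j : Fin n) =>
      if (i : ℕ) = (j : ℕ) then
        (if hj : (j : ℕ) < nr then uv ⟨(j : ℕ), hj⟩ else 1) else 0)
    (Mt : Matrix (Fin p) (Fin n) ℝ)
    (hMt : Mt = Matrix.of fun (i : Fin p) (j : Fin n) =>
      if hij : (i : ℕ) = (j : ℕ) ∧ (j : ℕ) < nr then mu ⟨(j : ℕ), hij.2⟩ else 0)
    (hA : A = U * Ups * X⁻¹) (hL : L = V * Mt * X⁻¹)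
    (gam : Fin nr → ℝ) (hgam : ∀ i, gam i = uv i / mu i)
    (lam : ℝ) (hlam : 0 < lam)
    (b : Fin m → ℝ) (h : Fin p → ℝ)
    (xlam : Fin n → ℝ)
    (hxlam : xlam = (Aᵀ * A + lam ^ 2 • (Lᵀ * L))⁻¹ *ᵥ (Aᵀ *ᵥ b + lam ^ 2 • (Lᵀ *ᵥ h))) :
    ∑ i, ((A *ᵥ xlam - b) i) ^ 2
      = ∑ i : Fin nr,
          (lam ^ 2 * gam i * ((fun r => V r (Fin.castLE hrp i)) ⬝ᵥ h)
            / (gam i ^ 2 + lam ^ 2)) ^ 2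
        + ∑ i : Fin nr,
            (lam ^ 2 * ((fun r => U r (Fin.castLE (hrn.trans hnm) i)) ⬝ᵥ b)
              / (gam i ^ 2 + lam ^ 2)) ^ 2
        + ∑ i ∈ Finset.univ.filter (fun i : Fin m => n ≤ (i : ℕ)),
            ((fun r => U r i) ⬝ᵥ b) ^ 2
        - 2 * ∑ i : Fin nr,
            lam ^ 4 * gam i * ((fun r => U r (Fin.castLE (hrn.trans hnm) i)) ⬝ᵥ b)
              * ((fun r => V r (Fin.castLE hrp i)) ⬝ᵥ h)
              / (gam i ^ 2 + lam ^ 2) ^ 2 := by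
  -- basic notation
  set β : Fin m → ℝ := Uᵀ *ᵥ b with hβ
  set η : Fin p → ℝ := Vᵀ *ᵥ h with hη
  set c : Fin n → ℝ := fun j => if hj : (j : ℕ) < nr then uv ⟨(j : ℕ), hj⟩ else 1 with hc
  set d : Fin n → ℝ := fun j =>
    if hj : (j : ℕ) < nr then uv ⟨(j : ℕ), hj⟩ ^ 2 + lam ^ 2 * mu ⟨(j : ℕ), hj⟩ ^ 2 else 1
    with hd
  have hd_pos : ∀ j, 0 < d j := by
    intro j
    rw [hd]
    dsimp only
    by_cases hj : (j : ℕ) < nr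
    · rw [dif_pos hj]
      have h1 := (hmu ⟨(j : ℕ), hj⟩).1
      positivity
    · rw [dif_neg hj]
      norm_num
  have hUe : ∀ (i : Fin m) (j : Fin n),
      Ups i j = if (i : ℕ) = (j : ℕ) then c j else 0 := by
    intro i j; rw [hUps]; rfl
  have hMe : ∀ (i : Fin p) (j : Fin n),
      Mt i j = if hij : (i : ℕ) = (j : ℕ) ∧ (j : ℕ) < nr then mu ⟨(j : ℕ), hij.2⟩ else 0 := by
    intro i j; rw [hMt]; rfl
  -- diagonal products
  have hUU : Upsᵀ * Ups = diagonal (fun j => c j ^ 2) := by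
    ext j k
    rw [Matrix.mul_apply]
    simp only [transpose_apply, hUe]
    by_cases hjk : j = k
    · subst hjk
      have hstep : ∀ i : Fin m,
          (if (i : ℕ) = (j : ℕ) then c j else 0) * (if (i : ℕ) = (j : ℕ) then c j else 0)
            = if (i : ℕ) = (j : ℕ) then c j * c j else 0 := by
        intro i; split <;> simp
      rw [Finset.sum_congr rfl (fun i _ => hstep i),
        sumIte (j : ℕ) (lt_of_lt_of_le j.2 hnm) (fun _ => c j * c j)]
      simp [sq]
    · rw [diagonal_apply_ne _ hjk]
      apply Finset.sum_eq_zero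
      intro i _
      by_cases h1 : (i : ℕ) = (j : ℕ)
      · by_cases h2 : (i : ℕ) = (k : ℕ)
        · exact absurd (Fin.ext (h1 ▸ h2 : (j : ℕ) = (k : ℕ))) hjk
        · simp [h2]
      · simp [h1]
  have hMM : Mtᵀ * Mt = diagonal (fun j : Fin n =>
      if hj : (j : ℕ) < nr then mu ⟨(j : ℕ), hj⟩ ^ 2 else 0) := by
    ext j k
    rw [Matrix.mul_apply]
    simp only [transpose_apply, hMe]
    by_cases hjk : j = k
    · subst hjk
      by_cases hj : (j : ℕ) < nr
      · have hstep : ∀ i : Fin p,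
            (if hij : (i : ℕ) = (j : ℕ) ∧ (j : ℕ) < nr then mu ⟨(j : ℕ), hij.2⟩ else 0) *
            (if hij : (i : ℕ) = (j : ℕ) ∧ (j : ℕ) < nr then mu ⟨(j : ℕ), hij.2⟩ else 0)
              = if (i : ℕ) = (j : ℕ) then mu ⟨(j : ℕ), hj⟩ * mu ⟨(j : ℕ), hj⟩ else 0 := by
          intro i
          by_cases hij : (i : ℕ) = (j : ℕ)
          · rw [dif_pos ⟨hij, hj⟩, if_pos hij]
          · rw [dif_neg (fun hh => hij hh.1), if_neg hij, zero_mul]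
        rw [Finset.sum_congr rfl (fun i _ => hstep i),
          sumIte (j : ℕ) (lt_of_lt_of_le hj hrp) (fun _ => mu ⟨(j : ℕ), hj⟩ * mu ⟨(j : ℕ), hj⟩)]
        simp [hj, sq]
      · rw [diagonal_apply_eq]
        rw [dif_neg hj]
        apply Finset.sum_eq_zero
        intro i _
        rw [dif_neg (fun hh => hj hh.2), zero_mul]
    · rw [diagonal_apply_ne _ hjk]
      apply Finset.sum_eq_zero
      intro i _
      by_cases h2 : (i : ℕ) = (k : ℕ) ∧ (k : ℕ) < nr
      · rw [dif_neg, zero_mul]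
        rintro ⟨h1a, _⟩
        exact hjk (Fin.ext (h1a.symm.trans h2.1))
      · rw [dif_neg h2, mul_zero]
  -- A_L diagonalization
  have hXdet' : IsUnit (Xᵀ).det := by rwa [Matrix.det_transpose]
  have hXX : X⁻¹ * X = 1 := Matrix.nonsing_inv_mul X hX
  have hXXT : Xᵀ * X⁻¹ᵀ = 1 := by
    rw [Matrix.transpose_nonsing_inv]
    exact Matrix.mul_nonsing_inv _ hXdet'
  have h1 : Aᵀ * A = X⁻¹ᵀ * ((diagonal fun j => c j ^ 2) * X⁻¹) := by
    rw [hA]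
    simp only [transpose_mul, Matrix.mul_assoc]
    rw [← Matrix.mul_assoc Uᵀ U, hU, Matrix.one_mul, ← Matrix.mul_assoc Upsᵀ Ups, hUU]
  have h2 : Lᵀ * L = X⁻¹ᵀ * ((diagonal fun j : Fin n =>
      if hj : (j : ℕ) < nr then mu ⟨(j : ℕ), hj⟩ ^ 2 else 0) * X⁻¹) := by
    rw [hL]
    simp only [transpose_mul, Matrix.mul_assoc]
    rw [← Matrix.mul_assoc Vᵀ V, hV, Matrix.one_mul, ← Matrix.mul_assoc Mtᵀ Mt, hMM]
  have hdsum : (diagonal fun j => c j ^ 2) + lam ^ 2 • diagonal (fun j : Fin n =>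
      if hj : (j : ℕ) < nr then mu ⟨(j : ℕ), hj⟩ ^ 2 else 0) = diagonal d := by
    rw [← Matrix.diagonal_smul, Matrix.diagonal_add]
    refine congrArg diagonal (funext fun j => ?_)
    by_cases hj : (j : ℕ) < nr
    · simp only [hc, hd, Pi.smul_apply, smul_eq_mul, dif_pos hj]
    · simp only [hc, hd, Pi.smul_apply, smul_eq_mul, dif_neg hj]
      norm_num
  have hAL : Aᵀ * A + lam ^ 2 • (Lᵀ * L) = X⁻¹ᵀ * (diagonal d * X⁻¹) := by
    rw [h1, h2, ← Matrix.mul_smul, ← Matrix.smul_mul, ← Matrix.mul_add, ← Matrix.add_mul, hdsum]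
  have hDinv : (diagonal d)⁻¹ = diagonal fun j => (d j)⁻¹ := by
    apply Matrix.inv_eq_right_inv
    rw [Matrix.diagonal_mul_diagonal]
    have hone : (fun i => d i * (d i)⁻¹) = fun _ => (1 : ℝ) :=
      funext fun j => mul_inv_cancel₀ (hd_pos j).ne'
    rw [hone, Matrix.diagonal_one]
  have hALinv : (Aᵀ * A + lam ^ 2 • (Lᵀ * L))⁻¹
      = X * ((diagonal fun j => (d j)⁻¹) * Xᵀ) := by
    rw [hAL, Matrix.mul_inv_rev, Matrix.mul_inv_rev, hDinv,
      Matrix.nonsing_inv_nonsing_inv X hX, Matrix.transpose_nonsing_inv,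
      Matrix.nonsing_inv_nonsing_inv _ hXdet', Matrix.mul_assoc]
  -- cancellation helpers
  have cancel1 : ∀ {k : ℕ} (Z : Matrix (Fin n) (Fin k) ℝ), X⁻¹ * (X * Z) = Z := by
    intro k Z; rw [← Matrix.mul_assoc, hXX, Matrix.one_mul]
  have cancel2 : ∀ {k : ℕ} (Z : Matrix (Fin n) (Fin k) ℝ), Xᵀ * (X⁻¹ᵀ * Z) = Z := by
    intro k Z; rw [← Matrix.mul_assoc, hXXT, Matrix.one_mul]
  set V1 : Fin n → ℝ := Upsᵀ *ᵥ β + lam ^ 2 • (Mtᵀ *ᵥ η) with hV1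
  set w : Fin m → ℝ := Ups *ᵥ ((diagonal fun j => (d j)⁻¹) *ᵥ V1) - β with hw
  have hAxl : A *ᵥ xlam = U *ᵥ (Ups *ᵥ ((diagonal fun j => (d j)⁻¹) *ᵥ V1)) := by
    rw [hxlam, hALinv]
    simp only [hV1, hβ, hη, hA, hL, transpose_mul, Matrix.mulVec_add, Matrix.mulVec_smul,
      Matrix.mulVec_mulVec]
    congr 1
    · congr 1
      simp only [Matrix.mul_assoc]
      rw [cancel1, cancel2]
    · congr 2
      simp only [Matrix.mul_assoc]
      rw [cancel1, cancel2]
  have hU1 : U *ᵥ β = b := by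
    rw [hβ, Matrix.mulVec_mulVec, hU', Matrix.one_mulVec]
  have key : A *ᵥ xlam - b = U *ᵥ w := by
    rw [hw, Matrix.mulVec_sub, hU1, hAxl]
  have horth : ∀ u : Fin m → ℝ, ∑ i, (U *ᵥ u) i ^ 2 = ∑ i, u i ^ 2 := by
    intro u
    have hsq : ∀ x : Fin m → ℝ, ∑ i, x i ^ 2 = x ⬝ᵥ x := by
      intro x; simp [dotProduct, sq]
    have hvm : (U *ᵥ u) ᵥ* U = u := by
      conv_lhs => rw [← Matrix.transpose_transpose U, Matrix.mulVec_transpose]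
      rw [Matrix.vecMul_vecMul, Matrix.transpose_transpose, hU, Matrix.vecMul_one]
    rw [hsq, hsq, Matrix.dotProduct_mulVec, hvm]
  -- componentwise values
  have hUpsT : ∀ (u : Fin m → ℝ) (j : Fin n),
      (Upsᵀ *ᵥ u) j = c j * u ⟨(j : ℕ), lt_of_lt_of_le j.2 hnm⟩ := by
    intro u j
    simp only [Matrix.mulVec, dotProduct, transpose_apply, hUe, ite_mul, zero_mul]
    exact sumIte (j : ℕ) (lt_of_lt_of_le j.2 hnm) (fun i => c j * u i)
  have hMtT : ∀ (u : Fin p → ℝ) (j : Fin n), (Mtᵀ *ᵥ u) j =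
      if hj : (j : ℕ) < nr then mu ⟨(j : ℕ), hj⟩ * u ⟨(j : ℕ), lt_of_lt_of_le hj hrp⟩ else 0 := by
    intro u j
    simp only [Matrix.mulVec, dotProduct, transpose_apply, hMe]
    by_cases hj : (j : ℕ) < nr
    · rw [dif_pos hj]
      have hstep : ∀ i : Fin p,
          (if hij : (i : ℕ) = (j : ℕ) ∧ (j : ℕ) < nr then mu ⟨(j : ℕ), hij.2⟩ else 0) * u i
            = if (i : ℕ) = (j : ℕ) then mu ⟨(j : ℕ), hj⟩ * u i else 0 := by
        intro i
        by_cases hij : (i : ℕ) = (j : ℕ)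
        · rw [dif_pos ⟨hij, hj⟩, if_pos hij]
        · rw [dif_neg (fun hh => hij hh.1), if_neg hij, zero_mul]
      rw [Finset.sum_congr rfl fun i _ => hstep i,
        sumIte (j : ℕ) (lt_of_lt_of_le hj hrp) (fun i => mu ⟨(j : ℕ), hj⟩ * u i)]
    · rw [dif_neg hj]
      apply Finset.sum_eq_zero
      intro i _
      rw [dif_neg (fun hh => hj hh.2), zero_mul]
  have hUpsV : ∀ (u : Fin n → ℝ) (i : Fin m), (Ups *ᵥ u) i =
      if hi : (i : ℕ) < n then c ⟨(i : ℕ), hi⟩ * u ⟨(i : ℕ), hi⟩ else 0 := by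
    intro u i
    simp only [Matrix.mulVec, dotProduct, hUe]
    by_cases hi : (i : ℕ) < n
    · rw [dif_pos hi]
      have hstep : ∀ j : Fin n, (if (i : ℕ) = (j : ℕ) then c j else 0) * u j
          = if (j : ℕ) = (i : ℕ) then c ⟨(i : ℕ), hi⟩ * u j else 0 := by
        intro j
        by_cases hij : (i : ℕ) = (j : ℕ)
        · rw [if_pos hij, if_pos hij.symm]
          rw [show j = ⟨(i : ℕ), hi⟩ from Fin.ext hij.symm]
        · rw [if_neg hij, if_neg (fun hh => hij hh.symm), zero_mul]
      rw [Finset.sum_congr rfl fun j _ => hstep j, sumIte (i : ℕ) hi (fun j => c ⟨(i : ℕ), hi⟩ * u j)]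
    · rw [dif_neg hi]
      apply Finset.sum_eq_zero
      intro j _
      rw [if_neg, zero_mul]
      intro hh
      exact hi (by omega)
  have hwval : ∀ i : Fin m, w i =
      (if hi : (i : ℕ) < n then
        c ⟨(i : ℕ), hi⟩ * ((d ⟨(i : ℕ), hi⟩)⁻¹ * V1 ⟨(i : ℕ), hi⟩) else 0) - β i := by
    intro i
    rw [hw, Pi.sub_apply, hUpsV]
    simp only [Matrix.mulVec_diagonal]
  have hV1val : ∀ j : Fin n, V1 j = c j * β ⟨(j : ℕ), lt_of_lt_of_le j.2 hnm⟩
      + lam ^ 2 * (if hj : (j : ℕ) < nr then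
          mu ⟨(j : ℕ), hj⟩ * η ⟨(j : ℕ), lt_of_lt_of_le hj hrp⟩ else 0) := by
    intro j
    rw [hV1, Pi.add_apply, Pi.smul_apply, hUpsT, hMtT, smul_eq_mul]
  have hbdot : ∀ i : Fin m, (fun r => U r i) ⬝ᵥ b = β i := by
    intro i
    rw [hβ]
    simp only [Matrix.mulVec, dotProduct, transpose_apply]
  have hhdot : ∀ k : Fin p, (fun r => V r k) ⬝ᵥ h = η k := by
    intro k
    rw [hη]
    simp only [Matrix.mulVec, dotProduct, transpose_apply]
  have hw1 : ∀ j : Fin nr, w (Fin.castLE (hrn.trans hnm) j) ^ 2 =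
      (lam ^ 2 * gam j * η (Fin.castLE hrp j) / (gam j ^ 2 + lam ^ 2)) ^ 2
      + (lam ^ 2 * β (Fin.castLE (hrn.trans hnm) j) / (gam j ^ 2 + lam ^ 2)) ^ 2
      - 2 * (lam ^ 4 * gam j * β (Fin.castLE (hrn.trans hnm) j) * η (Fin.castLE hrp j)
          / (gam j ^ 2 + lam ^ 2) ^ 2) := by
    intro j
    have hi : ((Fin.castLE (hrn.trans hnm) j : Fin m) : ℕ) < n := lt_of_lt_of_le j.2 hrn
    rw [hwval, dif_pos hi, hV1val]
    have em : (⟨((Fin.castLE (hrn.trans hnm) j : Fin m) : ℕ),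
        lt_of_lt_of_le hi hnm⟩ : Fin m) = Fin.castLE (hrn.trans hnm) j := Fin.ext rfl
    have ep : (⟨((Fin.castLE (hrn.trans hnm) j : Fin m) : ℕ),
        lt_of_lt_of_le j.isLt hrp⟩ : Fin p) = Fin.castLE hrp j := Fin.ext rfl
    simp only [hc, hd, Fin.coe_castLE, Fin.eta, dif_pos j.isLt, em, ep]
    rw [hgam]
    exact termId (uv j) (mu j) lam (β (Fin.castLE (hrn.trans hnm) j)) (η (Fin.castLE hrp j))
      (hmu j).1 hlam
  have hw2 : ∀ i : Fin m, ¬ (i : ℕ) < nr → (i : ℕ) < n → w i = 0 := by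
    intro i h1 h2
    rw [hwval, dif_pos h2, hV1val]
    simp only [hc, hd, dif_neg h1, Fin.eta]
    norm_num
  have hw3 : ∀ i : Fin m, n ≤ (i : ℕ) → w i ^ 2 = β i ^ 2 := by
    intro i hi
    rw [hwval, dif_neg (not_lt.2 hi), zero_sub, neg_sq]
  -- assemble
  have hLHS : ∑ i, ((A *ᵥ xlam - b) i) ^ 2 = ∑ i, w i ^ 2 := by
    rw [key]
    exact horth w
  have himg : Finset.univ.filter (fun i : Fin m => (i : ℕ) < nr)
      = (Finset.univ : Finset (Fin nr)).image (Fin.castLE (hrn.trans hnm)) := by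
    ext i
    simp only [Finset.mem_filter, Finset.mem_univ, true_and, Finset.mem_image]
    constructor
    · intro hi
      exact ⟨⟨(i : ℕ), hi⟩, Fin.ext rfl⟩
    · rintro ⟨j, rfl⟩
      exact j.isLt
  have hinj : ∀ x ∈ (Finset.univ : Finset (Fin nr)), ∀ y ∈ (Finset.univ : Finset (Fin nr)),
      Fin.castLE (hrn.trans hnm) x = Fin.castLE (hrn.trans hnm) y → x = y := by
    intro x _ y _ hxy
    exact Fin.castLE_injective _ hxy
  have hsplit : ∑ i, w i ^ 2 =
      ∑ i ∈ Finset.univ.filter (fun i : Fin m => (i : ℕ) < nr), w i ^ 2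
      + ∑ i ∈ Finset.univ.filter (fun i : Fin m => n ≤ (i : ℕ)), w i ^ 2 := by
    rw [← Finset.sum_filter_add_sum_filter_not Finset.univ
      (fun i : Fin m => (i : ℕ) < nr) (fun i => w i ^ 2)]
    congr 1
    rw [← Finset.sum_filter_add_sum_filter_not
      (Finset.univ.filter fun i : Fin m => ¬ (i : ℕ) < nr)
      (fun i : Fin m => (i : ℕ) < n) (fun i => w i ^ 2)]
    have e1 : ∑ i ∈ ((Finset.univ.filter fun i : Fin m => ¬ (i : ℕ) < nr).filter
        fun i : Fin m => (i : ℕ) < n), w i ^ 2 = 0 := by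
      apply Finset.sum_eq_zero
      intro i hi
      simp only [Finset.mem_filter, Finset.mem_univ, true_and] at hi
      rw [hw2 i hi.1 hi.2]
      norm_num
    have e2 : ((Finset.univ.filter fun i : Fin m => ¬ (i : ℕ) < nr).filter
        fun i : Fin m => ¬ (i : ℕ) < n) = Finset.univ.filter (fun i : Fin m => n ≤ (i : ℕ)) := by
      ext i
      simp only [Finset.mem_filter, Finset.mem_univ, true_and]
      omega
    rw [e1, e2, zero_add]
  have hsum1 : ∑ i ∈ Finset.univ.filter (fun i : Fin m => (i : ℕ) < nr), w i ^ 2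
      = ∑ j : Fin nr, w (Fin.castLE (hrn.trans hnm) j) ^ 2 := by
    rw [himg, Finset.sum_image hinj]
  have hsum3 : ∑ i ∈ Finset.univ.filter (fun i : Fin m => n ≤ (i : ℕ)), w i ^ 2
      = ∑ i ∈ Finset.univ.filter (fun i : Fin m => n ≤ (i : ℕ)), ((fun r => U r i) ⬝ᵥ b) ^ 2 := by
    apply Finset.sum_congr rfl
    intro i hi
    simp only [Finset.mem_filter, Finset.mem_univ, true_and] at hi
    rw [hw3 i hi, hbdot]
  rw [hLHS, hsplit, hsum1, hsum3]
  have hterm : ∀ j : Fin nr, w (Fin.castLE (hrn.trans hnm) j) ^ 2 =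
      (lam ^ 2 * gam j * ((fun r => V r (Fin.castLE hrp j)) ⬝ᵥ h) / (gam j ^ 2 + lam ^ 2)) ^ 2
      + (lam ^ 2 * ((fun r => U r (Fin.castLE (hrn.trans hnm) j)) ⬝ᵥ b) / (gam j ^ 2 + lam ^ 2)) ^ 2
      - 2 * (lam ^ 4 * gam j * ((fun r => U r (Fin.castLE (hrn.trans hnm) j)) ⬝ᵥ b)
          * ((fun r => V r (Fin.castLE hrp j)) ⬝ᵥ h) / (gam j ^ 2 + lam ^ 2) ^ 2) := by
    intro j
    rw [hw1 j, hbdot, hhdot]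
  rw [Finset.sum_congr rfl fun j _ => hterm j]
  rw [Finset.sum_sub_distrib, Finset.sum_add_distrib, ← Finset.mul_sum]
  ring
end

section
/- Under the GSVD setup with λ > 0, let b ∈ ℝ^m, h ∈ ℝ^p, x_λ = A_L⁻¹(Aᵀb + λ²Lᵀh) with A_L = AᵀA + λ²LᵀL, and define the GCV function G(λ) = ‖A x_λ − b‖₂² / [Tr(I_m − A A_L⁻¹Aᵀ)]². Then, with u_i the columns of U and v_i the columns of V, G(λ) = [ Σ_{i=1}^{ñ} (λ²γ_i(v_iᵀh)/(γ_i²+λ²))² + Σ_{i=1}^{ñ} (λ²(u_iᵀb)/(γ_i²+λ²))² + Σ_{i=n+1}^{m} (u_iᵀb)² − 2 Σ_{i=1}^{ñ} λ⁴γ_i(u_iᵀb)(v_iᵀh)/(γ_i²+λ²)² ] / [ (m−n) + Σ_{i=1}^{ñ} λ²/(γ_i²+λ²) ]², where sums whose lower limit exceeds their upper limit are zero. -/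
open Matrix BigOperators Finset

lemma stmt8_filter_lt_eq_map {a c : ℕ} (hac : a ≤ c) :
    Finset.univ.filter (fun i : Fin c => (i : ℕ) < a)
      = Finset.univ.map (Fin.castLEEmb hac) := by
  ext i
  simp only [Finset.mem_filter, Finset.mem_map, Finset.mem_univ, true_and]
  constructor
  · intro hi
    exact ⟨⟨i, hi⟩, Fin.ext rfl⟩
  · rintro ⟨j, rfl⟩
    simpa using j.2

theorem stmt8
    {m n p nr : ℕ} (hnm : n ≤ m) (hrn : nr ≤ n) (hrp : nr ≤ p)
    (A : Matrix (Fin m) (Fin n) ℝ) (L : Matrix (Fin p) (Fin n) ℝ)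
    (U : Matrix (Fin m) (Fin m) ℝ) (V : Matrix (Fin p) (Fin p) ℝ)
    (X : Matrix (Fin n) (Fin n) ℝ) (hX : IsUnit X.det)
    (hU : Uᵀ * U = 1) (hU' : U * Uᵀ = 1)
    (hV : Vᵀ * V = 1) (hV' : V * Vᵀ = 1)
    (uv mu : Fin nr → ℝ)
    (huv : ∀ i, 0 ≤ uv i ∧ uv i < 1) (hmu : ∀ i, 0 < mu i ∧ mu i ≤ 1)
    (huvmu : ∀ i, uv i ^ 2 + mu i ^ 2 = 1)
    (Ups : Matrix (Fin m) (Fin n) ℝ)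
    (hUps : Ups = Matrix.of fun (i : Fin m) (j : Fin n) =>
      if (i : ℕ) = (j : ℕ) then
        (if hj : (j : ℕ) < nr then uv ⟨(j : ℕ), hj⟩ else 1) else 0)
    (Mt : Matrix (Fin p) (Fin n) ℝ)
    (hMt : Mt = Matrix.of fun (i : Fin p) (j : Fin n) =>
      if hij : (i : ℕ) = (j : ℕ) ∧ (j : ℕ) < nr then mu ⟨(j : ℕ), hij.2⟩ else 0)
    (hA : A = U * Ups * X⁻¹) (hL : L = V * Mt * X⁻¹)
    (gam : Fin nr → ℝ) (hgam : ∀ i, gam i = uv i / mu i)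
    (lam : ℝ) (hlam : 0 < lam)
    (b : Fin m → ℝ) (h : Fin p → ℝ)
    (xlam : Fin n → ℝ)
    (hxlam : xlam = (Aᵀ * A + lam ^ 2 • (Lᵀ * L))⁻¹ *ᵥ (Aᵀ *ᵥ b + lam ^ 2 • (Lᵀ *ᵥ h)))
    (G : ℝ)
    (hG : G = (∑ i, ((A *ᵥ xlam - b) i) ^ 2)
      / (Matrix.trace (1 - A * (Aᵀ * A + lam ^ 2 • (Lᵀ * L))⁻¹ * Aᵀ)) ^ 2) :
    G = (∑ i : Fin nr,
          (lam ^ 2 * gam i * ((fun r => V r (Fin.castLE hrp i)) ⬝ᵥ h)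
            / (gam i ^ 2 + lam ^ 2)) ^ 2
        + ∑ i : Fin nr,
            (lam ^ 2 * ((fun r => U r (Fin.castLE (hrn.trans hnm) i)) ⬝ᵥ b)
              / (gam i ^ 2 + lam ^ 2)) ^ 2
        + ∑ i ∈ Finset.univ.filter (fun i : Fin m => n ≤ (i : ℕ)),
            ((fun r => U r i) ⬝ᵥ b) ^ 2
        - 2 * ∑ i : Fin nr,
            lam ^ 4 * gam i * ((fun r => U r (Fin.castLE (hrn.trans hnm) i)) ⬝ᵥ b)
              * ((fun r => V r (Fin.castLE hrp i)) ⬝ᵥ h)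
              / (gam i ^ 2 + lam ^ 2) ^ 2)
      / (((m : ℝ) - (n : ℝ)) + ∑ i : Fin nr, lam ^ 2 / (gam i ^ 2 + lam ^ 2)) ^ 2 := by
  -- scalar data
  set f : ℕ → ℝ := fun k => if hk : k < nr then uv ⟨k, hk⟩ else 1 with hf
  set g : ℕ → ℝ := fun k => if hk : k < nr then mu ⟨k, hk⟩ else 0 with hg
  set d : ℕ → ℝ := fun k => f k ^ 2 + lam ^ 2 * g k ^ 2 with hdd
  have hfk : ∀ (k : ℕ) (hk : k < nr), f k = uv ⟨k, hk⟩ := by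
    intro k hk; simp [hf, dif_pos hk]
  have hgk : ∀ (k : ℕ) (hk : k < nr), g k = mu ⟨k, hk⟩ := by
    intro k hk; simp [hg, dif_pos hk]
  have hgz : ∀ k : ℕ, ¬ k < nr → g k = 0 := by
    intro k hk; simp [hg, dif_neg hk]
  have hfz : ∀ k : ℕ, ¬ k < nr → f k = 1 := by
    intro k hk; simp [hf, dif_neg hk]
  have hdk : ∀ (k : ℕ) (hk : k < nr), d k = uv ⟨k, hk⟩ ^ 2 + lam ^ 2 * mu ⟨k, hk⟩ ^ 2 := by
    intro k hk; simp only [hdd]; rw [hfk k hk, hgk k hk]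
  have hdz : ∀ k : ℕ, ¬ k < nr → d k = 1 := by
    intro k hk; simp only [hdd]; rw [hfz k hk, hgz k hk]; ring
  have hdpos : ∀ k : ℕ, 0 < d k := by
    intro k
    by_cases hk : k < nr
    · rw [hdk k hk]
      have h1 := (hmu ⟨k, hk⟩).1
      have h2 : (0:ℝ) ≤ uv ⟨k, hk⟩ ^ 2 := sq_nonneg _
      have h3 : (0:ℝ) < lam ^ 2 * mu ⟨k, hk⟩ ^ 2 := by positivity
      linarith
    · rw [hdz k hk]; norm_num
  have hdne : ∀ k : ℕ, d k ≠ 0 := fun k => ne_of_gt (hdpos k)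
  -- entries
  have hUpsE : ∀ (i : Fin m) (j : Fin n),
      Ups i j = if (i : ℕ) = (j : ℕ) then f (j : ℕ) else 0 := by
    intro i j; rw [hUps]; simp only [Matrix.of_apply, hf]
  have hMtE : ∀ (i : Fin p) (j : Fin n),
      Mt i j = if (i : ℕ) = (j : ℕ) then g (j : ℕ) else 0 := by
    intro i j
    rw [hMt]
    simp only [Matrix.of_apply, hg]
    by_cases hij : (i : ℕ) = (j : ℕ) <;> by_cases hjr : (j : ℕ) < nr <;>
      simp [hij, hjr]
  -- diagonal products
  have hUU : Upsᵀ * Ups = Matrix.diagonal (fun j : Fin n => f (j : ℕ) ^ 2) := by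
    ext j k
    simp only [Matrix.mul_apply, Matrix.transpose_apply, Matrix.diagonal_apply]
    rw [Finset.sum_eq_single (Fin.castLE hnm j)]
    · rw [hUpsE, hUpsE]
      by_cases hjk : j = k
      · subst hjk
        simp [Fin.coe_castLE, pow_two]
      · have hjk' : (j : ℕ) ≠ (k : ℕ) := fun hc => hjk (Fin.ext hc)
        simp [Fin.coe_castLE, hjk, hjk']
    · intro i _ hi
      have hij : ¬ (i : ℕ) = (j : ℕ) := fun hc => hi (Fin.ext (by simpa using hc))
      rw [hUpsE, if_neg hij, zero_mul]
    · intro hmem; exact absurd (Finset.mem_univ _) hmem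
  have hMM : Mtᵀ * Mt = Matrix.diagonal (fun j : Fin n => g (j : ℕ) ^ 2) := by
    ext j k
    simp only [Matrix.mul_apply, Matrix.transpose_apply, Matrix.diagonal_apply]
    by_cases hjr : (j : ℕ) < nr
    · rw [Finset.sum_eq_single (Fin.castLE hrp ⟨(j : ℕ), hjr⟩)]
      · rw [hMtE, hMtE]
        by_cases hjk : j = k
        · subst hjk
          simp [Fin.coe_castLE, pow_two]
        · have hjk' : (j : ℕ) ≠ (k : ℕ) := fun hc => hjk (Fin.ext hc)
          simp [Fin.coe_castLE, hjk, hjk']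
      · intro i _ hi
        have hij : ¬ (i : ℕ) = (j : ℕ) := fun hc => hi (Fin.ext (by simpa using hc))
        rw [hMtE, if_neg hij, zero_mul]
      · intro hmem; exact absurd (Finset.mem_univ _) hmem
    · rw [Finset.sum_eq_zero]
      · rw [eq_comm]
        have h0 : g (j : ℕ) ^ 2 = 0 := by rw [hgz _ hjr]; ring
        by_cases hjk : j = k
        · subst hjk; simp [h0]
        · simp [hjk]
      · intro i _
        rw [hMtE]
        by_cases hij : (i : ℕ) = (j : ℕ)
        · rw [if_pos hij, hgz _ hjr, zero_mul]
        · rw [if_neg hij, zero_mul]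
  -- the middle diagonal matrix
  set D : Matrix (Fin n) (Fin n) ℝ := Matrix.diagonal (fun j : Fin n => d (j : ℕ)) with hD
  have hDsplit : D = Matrix.diagonal (fun j : Fin n => f (j : ℕ) ^ 2)
      + lam ^ 2 • Matrix.diagonal (fun j : Fin n => g (j : ℕ) ^ 2) := by
    rw [hD]
    ext j k
    by_cases hjk : j = k
    · subst hjk
      simp [Matrix.diagonal_apply_eq, hdd]
    · simp [Matrix.diagonal_apply_ne _ hjk]
  have hAtA : Aᵀ * A = X⁻¹ᵀ * Matrix.diagonal (fun j : Fin n => f (j : ℕ) ^ 2) * X⁻¹ := by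
    rw [hA]
    rw [Matrix.transpose_mul, Matrix.transpose_mul]
    simp only [← Matrix.mul_assoc]
    rw [Matrix.mul_assoc (X⁻¹ᵀ * Upsᵀ) Uᵀ U, hU, Matrix.mul_one]
    rw [Matrix.mul_assoc X⁻¹ᵀ Upsᵀ Ups, hUU]
  have hLtL : Lᵀ * L = X⁻¹ᵀ * Matrix.diagonal (fun j : Fin n => g (j : ℕ) ^ 2) * X⁻¹ := by
    rw [hL]
    rw [Matrix.transpose_mul, Matrix.transpose_mul]
    simp only [← Matrix.mul_assoc]
    rw [Matrix.mul_assoc (X⁻¹ᵀ * Mtᵀ) Vᵀ V, hV, Matrix.mul_one]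
    rw [Matrix.mul_assoc X⁻¹ᵀ Mtᵀ Mt, hMM]
  have hALeq : Aᵀ * A + lam ^ 2 • (Lᵀ * L) = X⁻¹ᵀ * D * X⁻¹ := by
    rw [hAtA, hLtL, hDsplit, Matrix.mul_add, Matrix.add_mul, Matrix.mul_smul, Matrix.smul_mul]
  have hXt : IsUnit (Xᵀ).det := by rwa [Matrix.det_transpose]
  have hDinv : D⁻¹ = Matrix.diagonal (fun j : Fin n => (d (j : ℕ))⁻¹) := by
    rw [hD]
    apply Matrix.inv_eq_right_inv
    rw [Matrix.diagonal_mul_diagonal]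
    have : (fun j : Fin n => d (j : ℕ) * (d (j : ℕ))⁻¹) = fun _ => (1:ℝ) :=
      funext fun j => mul_inv_cancel₀ (hdne _)
    rw [this, Matrix.diagonal_one]
  have hALinv : (X⁻¹ᵀ * D * X⁻¹)⁻¹ = X * D⁻¹ * Xᵀ := by
    rw [Matrix.mul_inv_rev, Matrix.mul_inv_rev]
    rw [Matrix.nonsing_inv_nonsing_inv X hX]
    rw [Matrix.transpose_nonsing_inv]
    rw [Matrix.nonsing_inv_nonsing_inv Xᵀ hXt]
    rw [← Matrix.mul_assoc]
  have hXinvX : X⁻¹ * X = 1 := Matrix.nonsing_inv_mul X hX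
  have hXtXinvT : Xᵀ * X⁻¹ᵀ = 1 := by
    rw [← Matrix.transpose_mul, hXinvX, Matrix.transpose_one]
  have hAALAt : A * (Aᵀ * A + lam ^ 2 • (Lᵀ * L))⁻¹ * Aᵀ
      = U * (Ups * D⁻¹ * Upsᵀ) * Uᵀ := by
    rw [hALeq, hALinv, hA]
    rw [Matrix.transpose_mul, Matrix.transpose_mul]
    simp only [← Matrix.mul_assoc]
    rw [Matrix.mul_assoc (U * Ups) X⁻¹ X, hXinvX, Matrix.mul_one]
    rw [Matrix.mul_assoc (U * Ups * D⁻¹) Xᵀ X⁻¹ᵀ, hXtXinvT, Matrix.mul_one]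
  have hAALLt : A * (Aᵀ * A + lam ^ 2 • (Lᵀ * L))⁻¹ * Lᵀ
      = U * (Ups * D⁻¹ * Mtᵀ) * Vᵀ := by
    rw [hALeq, hALinv, hA, hL]
    rw [Matrix.transpose_mul, Matrix.transpose_mul]
    simp only [← Matrix.mul_assoc]
    rw [Matrix.mul_assoc (U * Ups) X⁻¹ X, hXinvX, Matrix.mul_one]
    rw [Matrix.mul_assoc (U * Ups * D⁻¹) Xᵀ X⁻¹ᵀ, hXtXinvT, Matrix.mul_one]
  -- the key vectors
  set β : Fin m → ℝ := Uᵀ *ᵥ b with hβ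
  set η : Fin p → ℝ := Vᵀ *ᵥ h with hη
  have hβE : ∀ i : Fin m, (fun r => U r i) ⬝ᵥ b = β i := by
    intro i
    rw [hβ]
    simp [Matrix.mulVec, dotProduct]
  have hηE : ∀ i : Fin p, (fun r => V r i) ⬝ᵥ h = η i := by
    intro i
    rw [hη]
    simp [Matrix.mulVec, dotProduct]
  -- per-index scalar facts
  have hgampos : ∀ i : Fin nr, 0 < gam i ^ 2 + lam ^ 2 := by
    intro i; positivity
  have hgamd : ∀ i : Fin nr, gam i ^ 2 + lam ^ 2 = d (i : ℕ) / mu i ^ 2 := by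
    intro i
    rw [hgam, hdk (i : ℕ) i.2]
    have hm := (hmu i).1
    field_simp
  -- trace computation
  have htr : Matrix.trace (1 - A * (Aᵀ * A + lam ^ 2 • (Lᵀ * L))⁻¹ * Aᵀ)
      = ((m : ℝ) - (n : ℝ)) + ∑ i : Fin nr, lam ^ 2 / (gam i ^ 2 + lam ^ 2) := by
    rw [Matrix.trace_sub, Matrix.trace_one, hAALAt]
    rw [Matrix.trace_mul_cycle, ← Matrix.mul_assoc, hU, Matrix.one_mul]
    have htrS : Matrix.trace (Ups * D⁻¹ * Upsᵀ)
        = ∑ j : Fin n, f (j : ℕ) ^ 2 * (d (j : ℕ))⁻¹ := by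
      rw [Matrix.trace_mul_cycle, hUU, hDinv, Matrix.diagonal_mul_diagonal,
        Matrix.trace_diagonal]
    rw [htrS]
    have hsum1 : ∑ j : Fin n, f (j : ℕ) ^ 2 * (d (j : ℕ))⁻¹
        = (n : ℝ) - ∑ j : Fin n, lam ^ 2 * g (j : ℕ) ^ 2 * (d (j : ℕ))⁻¹ := by
      rw [eq_sub_iff_add_eq, ← Finset.sum_add_distrib]
      have hone : ∀ j : Fin n,
          f (j : ℕ) ^ 2 * (d (j : ℕ))⁻¹ + lam ^ 2 * g (j : ℕ) ^ 2 * (d (j : ℕ))⁻¹ = 1 := by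
        intro j
        rw [← add_mul, show f (j : ℕ) ^ 2 + lam ^ 2 * g (j : ℕ) ^ 2 = d (j : ℕ) from by simp only [hdd]]
        exact mul_inv_cancel₀ (hdne _)
      rw [Finset.sum_congr rfl (fun j _ => hone j), Finset.sum_const, Finset.card_univ,
        Fintype.card_fin, nsmul_eq_mul, mul_one]
    have hterm : ∀ i : Fin nr,
        lam ^ 2 * g (i : ℕ) ^ 2 * (d (i : ℕ))⁻¹ = lam ^ 2 / (gam i ^ 2 + lam ^ 2) := by
      intro i
      rw [hgamd i, hgk (i : ℕ) i.2, Fin.eta, div_div_eq_mul_div, div_eq_mul_inv]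
    have hsum2 : ∑ j : Fin n, lam ^ 2 * g (j : ℕ) ^ 2 * (d (j : ℕ))⁻¹
        = ∑ i : Fin nr, lam ^ 2 / (gam i ^ 2 + lam ^ 2) := by
      rw [← Finset.sum_filter_add_sum_filter_not Finset.univ (fun j : Fin n => (j : ℕ) < nr)]
      have h0 : ∑ j ∈ Finset.univ.filter (fun j : Fin n => ¬ (j : ℕ) < nr),
          lam ^ 2 * g (j : ℕ) ^ 2 * (d (j : ℕ))⁻¹ = 0 := by
        apply Finset.sum_eq_zero
        intro j hj
        rw [hgz _ (Finset.mem_filter.mp hj).2]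
        ring
      rw [h0, add_zero, stmt8_filter_lt_eq_map hrn, Finset.sum_map]
      apply Finset.sum_congr rfl
      intro i _
      simpa using hterm i
    rw [hsum1, hsum2]
    simp only [Fintype.card_fin]
    ring
  -- norm invariance under U
  have hUnorm : ∀ (w : Fin m → ℝ), ∑ i, ((U *ᵥ w) i) ^ 2 = ∑ i, (w i) ^ 2 := by
    intro w
    have h1 : ∑ i, ((U *ᵥ w) i) ^ 2 = (U *ᵥ w) ⬝ᵥ (U *ᵥ w) := by
      simp [dotProduct, pow_two]
    have h2 : (U *ᵥ w) ⬝ᵥ (U *ᵥ w) = w ⬝ᵥ w := by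
      rw [Matrix.dotProduct_mulVec, ← Matrix.mulVec_transpose, Matrix.mulVec_mulVec, hU,
        Matrix.one_mulVec]
    rw [h1, h2]
    simp [dotProduct, pow_two]
  -- explicit residual vector
  set c : Fin m → ℝ :=
    Ups *ᵥ (D⁻¹ *ᵥ (Upsᵀ *ᵥ β)) + lam ^ 2 • (Ups *ᵥ (D⁻¹ *ᵥ (Mtᵀ *ᵥ η))) - β with hc
  have hAx : A *ᵥ xlam - b = U *ᵥ c := by
    rw [hxlam, Matrix.mulVec_mulVec, Matrix.mulVec_add, Matrix.mulVec_smul]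
    rw [Matrix.mulVec_mulVec, Matrix.mulVec_mulVec, hAALAt, hAALLt]
    rw [hc, Matrix.mulVec_sub, Matrix.mulVec_add, Matrix.mulVec_smul, hβ, hη]
    simp only [Matrix.mulVec_mulVec]
    rw [hU', Matrix.one_mulVec]
    simp only [Matrix.mul_assoc]
  -- componentwise helpers
  have hUpsmul : ∀ (y : Fin n → ℝ) (i : Fin m),
      (Ups *ᵥ y) i = if hi : (i : ℕ) < n then f (i : ℕ) * y ⟨(i : ℕ), hi⟩ else 0 := by
    intro y i
    simp only [Matrix.mulVec, dotProduct]
    by_cases hi : (i : ℕ) < n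
    · rw [dif_pos hi, Finset.sum_eq_single (⟨(i : ℕ), hi⟩ : Fin n)]
      · rw [hUpsE, if_pos rfl]
      · intro j _ hj
        have hij : ¬ (i : ℕ) = (j : ℕ) := fun hcc => hj (Fin.ext (by simpa using hcc.symm))
        rw [hUpsE, if_neg hij, zero_mul]
      · intro hmem; exact absurd (Finset.mem_univ _) hmem
    · rw [dif_neg hi]
      apply Finset.sum_eq_zero
      intro j _
      have hij : ¬ (i : ℕ) = (j : ℕ) := fun hcc => hi (hcc ▸ j.2)
      rw [hUpsE, if_neg hij, zero_mul]
  have hUpsTmul : ∀ (z : Fin m → ℝ) (j : Fin n),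
      (Upsᵀ *ᵥ z) j = f (j : ℕ) * z (Fin.castLE hnm j) := by
    intro z j
    simp only [Matrix.mulVec, dotProduct, Matrix.transpose_apply]
    rw [Finset.sum_eq_single (Fin.castLE hnm j)]
    · rw [hUpsE]
      simp [Fin.coe_castLE]
    · intro i _ hi
      have hij : ¬ (i : ℕ) = (j : ℕ) := fun hcc => hi (Fin.ext (by simpa using hcc))
      rw [hUpsE, if_neg hij, zero_mul]
    · intro hmem; exact absurd (Finset.mem_univ _) hmem
  have hMtTmul : ∀ (z : Fin p → ℝ) (j : Fin n),
      (Mtᵀ *ᵥ z) j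
        = if hj : (j : ℕ) < nr then mu ⟨(j : ℕ), hj⟩ * z (Fin.castLE hrp ⟨(j : ℕ), hj⟩) else 0 := by
    intro z j
    simp only [Matrix.mulVec, dotProduct, Matrix.transpose_apply]
    by_cases hj : (j : ℕ) < nr
    · rw [dif_pos hj, Finset.sum_eq_single (Fin.castLE hrp ⟨(j : ℕ), hj⟩)]
      · rw [hMtE]
        simp [Fin.coe_castLE, hgk _ hj]
      · intro i _ hi
        have hij : ¬ (i : ℕ) = (j : ℕ) := fun hcc => hi (Fin.ext (by simpa using hcc))
        rw [hMtE, if_neg hij, zero_mul]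
      · intro hmem; exact absurd (Finset.mem_univ _) hmem
    · rw [dif_neg hj]
      apply Finset.sum_eq_zero
      intro i _
      rw [hMtE]
      by_cases hij : (i : ℕ) = (j : ℕ)
      · rw [if_pos hij, hgz _ hj, zero_mul]
      · rw [if_neg hij, zero_mul]
  have hDmul : ∀ (y : Fin n → ℝ) (j : Fin n), (D⁻¹ *ᵥ y) j = (d (j : ℕ))⁻¹ * y j := by
    intro y j
    rw [hDinv, Matrix.mulVec_diagonal]
  -- component values of c
  have hc3 : ∀ i : Fin m, n ≤ (i : ℕ) → c i = -β i := by
    intro i hi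
    have hi' : ¬ (i : ℕ) < n := not_lt.mpr hi
    rw [hc]
    simp only [Pi.sub_apply, Pi.add_apply, Pi.smul_apply, smul_eq_mul]
    rw [hUpsmul, hUpsmul, dif_neg hi', dif_neg hi']
    ring
  have hc2 : ∀ i : Fin m, nr ≤ (i : ℕ) → (i : ℕ) < n → c i = 0 := by
    intro i hir hin
    have hir' : ¬ (i : ℕ) < nr := not_lt.mpr hir
    rw [hc]
    simp only [Pi.sub_apply, Pi.add_apply, Pi.smul_apply, smul_eq_mul]
    rw [hUpsmul, hUpsmul, dif_pos hin, dif_pos hin, hDmul, hDmul, hUpsTmul, hMtTmul]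
    simp only [Fin.val_mk]
    rw [dif_neg hir', hfz _ hir', hdz _ hir']
    have hcast : Fin.castLE hnm (⟨(i : ℕ), hin⟩ : Fin n) = i := Fin.ext rfl
    rw [hcast]
    norm_num
  have hc1 : ∀ (i : Fin m) (hi : (i : ℕ) < nr),
      c i = lam ^ 2 * (uv ⟨(i : ℕ), hi⟩ * mu ⟨(i : ℕ), hi⟩ * η (Fin.castLE hrp ⟨(i : ℕ), hi⟩)
        - mu ⟨(i : ℕ), hi⟩ ^ 2 * β i) / d (i : ℕ) := by
    intro i hi
    have hin : (i : ℕ) < n := lt_of_lt_of_le hi hrn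
    rw [hc]
    simp only [Pi.sub_apply, Pi.add_apply, Pi.smul_apply, smul_eq_mul]
    rw [hUpsmul, hUpsmul, dif_pos hin, dif_pos hin, hDmul, hDmul, hUpsTmul, hMtTmul]
    simp only [Fin.val_mk]
    rw [dif_pos hi, hfk _ hi, hdk _ hi]
    have hcast : Fin.castLE hnm (⟨(i : ℕ), hin⟩ : Fin n) = i := Fin.ext rfl
    rw [hcast]
    have hdne' : uv ⟨(i : ℕ), hi⟩ ^ 2 + lam ^ 2 * mu ⟨(i : ℕ), hi⟩ ^ 2 ≠ 0 := by
      rw [← hdk _ hi]; exact hdne _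
    field_simp
    ring
  -- split the sum
  have hsplit : ∑ i, (c i) ^ 2
      = ∑ i ∈ Finset.univ.filter (fun i : Fin m => (i : ℕ) < nr), (c i) ^ 2
        + ∑ i ∈ Finset.univ.filter (fun i : Fin m => n ≤ (i : ℕ)), (β i) ^ 2 := by
    rw [← Finset.sum_filter_add_sum_filter_not Finset.univ (fun i : Fin m => (i : ℕ) < n)]
    congr 1
    · apply (Finset.sum_subset ?_ ?_).symm
      · intro x hx
        simp only [Finset.mem_filter, Finset.mem_univ, true_and] at hx ⊢
        exact lt_of_lt_of_le hx hrn
      · intro x hx hx'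
        simp only [Finset.mem_filter, Finset.mem_univ, true_and] at hx hx'
        rw [hc2 x (not_lt.mp hx') hx]
        norm_num
    · rw [Finset.filter_congr (fun (x : Fin m) _ =>
        (not_lt : ¬ (x : ℕ) < n ↔ n ≤ (x : ℕ)))]
      apply Finset.sum_congr rfl
      intro i hi
      rw [hc3 i (Finset.mem_filter.mp hi).2]
      ring
  have hmapped : ∑ i ∈ Finset.univ.filter (fun i : Fin m => (i : ℕ) < nr), (c i) ^ 2
      = ∑ i : Fin nr, (c (Fin.castLE (hrn.trans hnm) i)) ^ 2 := by
    rw [stmt8_filter_lt_eq_map (hrn.trans hnm), Finset.sum_map]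
    simp [Fin.coe_castLEEmb]
  have hpt : ∀ i : Fin nr, (c (Fin.castLE (hrn.trans hnm) i)) ^ 2
      = (lam ^ 2 * gam i * η (Fin.castLE hrp i) / (gam i ^ 2 + lam ^ 2)) ^ 2
      + (lam ^ 2 * β (Fin.castLE (hrn.trans hnm) i) / (gam i ^ 2 + lam ^ 2)) ^ 2
      - 2 * (lam ^ 4 * gam i * β (Fin.castLE (hrn.trans hnm) i) * η (Fin.castLE hrp i)
          / (gam i ^ 2 + lam ^ 2) ^ 2) := by
    intro i
    have hiv : ((Fin.castLE (hrn.trans hnm) i : Fin m) : ℕ) < nr := by simpa using i.2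
    rw [hc1 _ hiv]
    have e1 : (⟨((Fin.castLE (hrn.trans hnm) i : Fin m) : ℕ), hiv⟩ : Fin nr) = i :=
      Fin.ext (by simp)
    rw [e1, hdk _ hiv, e1, hgam]
    have hm := ne_of_gt (hmu i).1
    have hdne' : uv i ^ 2 + lam ^ 2 * mu i ^ 2 ≠ 0 := by
      rw [show uv i ^ 2 + lam ^ 2 * mu i ^ 2 = d (i : ℕ) from by
        rw [hdk _ i.2, Fin.eta]]
      exact hdne _
    have hlne := ne_of_gt hlam
    field_simp
    ring
  -- final assembly
  rw [hG, htr]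
  rw [show ∑ i, ((A *ᵥ xlam - b) i) ^ 2 = ∑ i, (c i) ^ 2 from by rw [hAx]; exact hUnorm c]
  rw [hsplit, hmapped, Finset.sum_congr rfl (fun i _ => hpt i)]
  simp only [hβE, hηE]
  rw [Finset.sum_sub_distrib, Finset.sum_add_distrib, ← Finset.mul_sum]
  congr 1
  ring
end
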